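/- For every integer n ≥ 1, every p ∈ (0,1), and all real numbers b and t with b < n and t ≥ 0, the domination number D of a random graph G ~ G(n,p) satisfies P(D ≤ b) · P(D ≥ b + t) ≤ exp( −t² / (4(n−b)) ). -/

import Mathlib

/-
Talagrand's inequality on the cube `{0,1}^m` with independent `Bernoulli p` coordinates: for
nonempty `A`, `E exp(d(x, A)² / 4) ≤ 1 / P(A)`, where `d(x, A)` is the Euclidean distance from `0`
to the convex hull of the disagreement vectors `(1[xᵢ ≠ yᵢ])ᵢ`, `y ∈ A`. It is proved by induction
on `m`: splitting off the first coordinate, a point of the hull over `A` is interpolated between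
the hulls over a slice and over the projection of `A`, and Hölder's inequality combines the two
induction hypotheses.

The domination number has small certificates: if `S` dominates `G(x)`, the `n - |S|` edges
joining each vertex outside `S` to a neighbour in `S` satisfy
`D(G(y)) ≤ |S| + #{edges on which x, y differ}`.
So every `x` with `D ≤ b` is at convex distance at least `(t + b - ⌊b⌋) / √(n - ⌊b⌋)` from
`{D ≥ b + t}`, and Markov's inequality applied to Talagrand's bound gives the claim.
-/

open MeasureTheory Filter
open scoped Classical

/-- The Bernoulli measure on `Bool` with success probability `p` (clamped to `[0,1]`). -/
noncomputable def bernoulliMeasure (p : ℝ) : Measure Bool :=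
  (PMF.bernoulli (min (Real.toNNReal p) 1) (min_le_right _ _)).toMeasure

instance (p : ℝ) : IsProbabilityMeasure (bernoulliMeasure p) :=
  PMF.toMeasure.isProbabilityMeasure _

/-- The Erdős–Rényi measure `G(n,p)`: every potential edge (pair of vertices of `Fin n`)
is present independently with probability `p`.  A sample point is an indicator function
on `Sym2 (Fin n)` (diagonal coordinates are simply ignored). -/
noncomputable def gnp (n : ℕ) (p : ℝ) : Measure (Sym2 (Fin n) → Bool) :=
  Measure.pi fun _ => bernoulliMeasure p

/-- The simple graph determined by an edge-indicator function. -/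
def graphOf {n : ℕ} (f : Sym2 (Fin n) → Bool) : SimpleGraph (Fin n) where
  Adj v w := v ≠ w ∧ f s(v, w) = true
  symm := ⟨by
    intro v w h
    exact ⟨Ne.symm h.1, by rw [Sym2.eq_swap]; exact h.2⟩⟩
  loopless := ⟨fun v h => h.1 rfl⟩

/-- A set `S` of vertices is dominating if every vertex is in `S` or adjacent to a member
of `S`. -/
def IsDominating {n : ℕ} (G : SimpleGraph (Fin n)) (S : Set (Fin n)) : Prop :=
  ∀ v, v ∈ S ∨ ∃ u ∈ S, G.Adj u v

/-- The domination number: the smallest cardinality of a dominating set. -/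
noncomputable def domNumber {n : ℕ} (G : SimpleGraph (Fin n)) : ℕ :=
  sInf {r | ∃ S : Finset (Fin n), S.card = r ∧ IsDominating G ↑S}

/-- The number of dominating sets of size `r`. -/
noncomputable def numDomSets {n : ℕ} (G : SimpleGraph (Fin n)) (r : ℕ) : ℕ :=
  ((Finset.powersetCard r (Finset.univ : Finset (Fin n))).filter
    (fun S => IsDominating G ↑S)).card

/-- The expected number of dominating sets of size `r` in `G(n,p)`:
`E(X_r) = C(n,r) (1-(1-p)^r)^(n-r)`. -/
noncomputable def EX (n r : ℕ) (p : ℝ) : ℝ :=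
  (n.choose r : ℝ) * (1 - (1 - p) ^ r) ^ (n - r)

/-- The critical size `r̂ = min{ r | E(X_r) ≥ 1/d } - 1`, where `d = np`. -/
noncomputable def rhat (n : ℕ) (p : ℝ) : ℕ :=
  sInf {r : ℕ | EX n r p ≥ 1 / (n * p)} - 1

open Finset Real

namespace Talagrand

section Basic

variable {ι : Type*} {p : ℝ}

def coordWeight (p : ℝ) (b : Bool) : ℝ := if b then p else 1 - p

def diffVec (x y : ι → Bool) : ι → ℝ := fun i => if x i = y i then 0 else 1

noncomputable def hull (x : ι → Bool) (A : Finset (ι → Bool)) : Set (ι → ℝ) :=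
  convexHull ℝ (diffVec x '' A)

lemma sum_diffVec (x y : ι → Bool) (C : Finset ι) :
    ∑ i ∈ C, diffVec x y i = #{i ∈ C | x i ≠ y i} := by
  rw [card_filter, Nat.cast_sum]
  exact sum_congr rfl fun i _ => by by_cases h : x i = y i <;> simp [diffVec, h]

lemma diffVec_mem_hull {x y : ι → Bool} {A : Finset (ι → Bool)} (hy : y ∈ A) :
    diffVec x y ∈ hull x A :=
  subset_convexHull ℝ _ ⟨y, hy, rfl⟩

lemma hull_subset_cube {x : ι → Bool} {A : Finset (ι → Bool)} :
    hull x A ⊆ Set.univ.pi fun _ => Set.Icc 0 1 :=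
  convexHull_min (by rintro _ ⟨y, -, rfl⟩ i -; simp only [diffVec]; split <;> norm_num)
    (convex_pi fun _ _ => convex_Icc 0 1)

variable [Fintype ι]

noncomputable def weight (p : ℝ) (x : ι → Bool) : ℝ := ∏ i, coordWeight p (x i)

noncomputable def prob (p : ℝ) (A : Finset (ι → Bool)) : ℝ := ∑ x ∈ A, weight p x

def sqNorm (v : ι → ℝ) : ℝ := ∑ i, v i ^ 2

/-- Talagrand's convex distance `d(x, A)`, squared. -/
noncomputable def convexDistSq (x : ι → Bool) (A : Finset (ι → Bool)) : ℝ :=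
  sInf (sqNorm '' hull x A)

/-- The explicit `DecidableEq ι` makes the sum over `ι → Bool` use, at `ι = Fin m`, the same
`Fintype` instance as sums written there directly (rather than the classical one). -/
noncomputable def expMoment [DecidableEq ι] (p : ℝ) (A : Finset (ι → Bool)) : ℝ :=
  ∑ x, weight p x * exp (convexDistSq x A / 4)

lemma coordWeight_nonneg (hp : p ∈ Set.Icc 0 1) (b : Bool) : 0 ≤ coordWeight p b := by
  cases b <;> simp [coordWeight] <;> linarith [hp.1, hp.2]

lemma coordWeight_pos (hp : p ∈ Set.Ioo 0 1) (b : Bool) : 0 < coordWeight p b := by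
  cases b <;> simp [coordWeight] <;> linarith [hp.1, hp.2]

lemma weight_nonneg (hp : p ∈ Set.Icc 0 1) (x : ι → Bool) : 0 ≤ weight p x :=
  prod_nonneg fun _ _ => coordWeight_nonneg hp _

lemma weight_pos (hp : p ∈ Set.Ioo 0 1) (x : ι → Bool) : 0 < weight p x :=
  prod_pos fun _ _ => coordWeight_pos hp _

lemma prob_nonneg (hp : p ∈ Set.Icc 0 1) (A : Finset (ι → Bool)) : 0 ≤ prob p A :=
  sum_nonneg fun x _ => weight_nonneg hp x

lemma prob_pos (hp : p ∈ Set.Ioo 0 1) {A : Finset (ι → Bool)} (hA : A.Nonempty) :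
    0 < prob p A :=
  sum_pos (fun x _ => weight_pos hp x) hA

lemma prob_mono (hp : p ∈ Set.Icc 0 1) {A B : Finset (ι → Bool)} (h : A ⊆ B) :
    prob p A ≤ prob p B :=
  sum_le_sum_of_subset_of_nonneg h fun x _ _ => weight_nonneg hp x

lemma expMoment_nonneg [DecidableEq ι] (hp : p ∈ Set.Icc 0 1) (A : Finset (ι → Bool)) :
    0 ≤ expMoment p A :=
  sum_nonneg fun x _ => mul_nonneg (weight_nonneg hp x) (exp_pos _).le

lemma sqNorm_nonneg (v : ι → ℝ) : 0 ≤ sqNorm v := sum_nonneg fun _ _ => sq_nonneg _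

lemma sqNorm_combo_le {l : ℝ} (hl : l ∈ Set.Icc 0 1) (u v : ι → ℝ) :
    sqNorm (l • u + (1 - l) • v) ≤ l * sqNorm u + (1 - l) * sqNorm v := by
  simp only [sqNorm, mul_sum, ← sum_add_distrib]
  refine sum_le_sum fun i _ => ?_
  have h := mul_nonneg (mul_nonneg hl.1 (sub_nonneg.2 hl.2)) (sq_nonneg (u i - v i))
  simp only [Pi.add_apply, Pi.smul_apply, smul_eq_mul]
  nlinarith

variable {x : ι → Bool} {A : Finset (ι → Bool)}

lemma convexDistSq_le {v : ι → ℝ} (hv : v ∈ hull x A) : convexDistSq x A ≤ sqNorm v :=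
  csInf_le ⟨0, by rintro _ ⟨w, -, rfl⟩; exact sqNorm_nonneg w⟩ ⟨v, hv, rfl⟩

lemma convexDistSq_nonneg : 0 ≤ convexDistSq x A :=
  Real.sInf_nonneg (by rintro _ ⟨w, -, rfl⟩; exact sqNorm_nonneg w)

lemma convexDistSq_eq_zero_of_mem (hx : x ∈ A) : convexDistSq x A = 0 := by
  refine le_antisymm ?_ convexDistSq_nonneg
  simpa [sqNorm, diffVec] using convexDistSq_le (diffVec_mem_hull (x := x) hx)

lemma exists_sqNorm_eq_convexDistSq (hA : A.Nonempty) :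
    ∃ v ∈ hull x A, sqNorm v = convexDistSq x A := by
  have hne : (hull x A).Nonempty := let ⟨_, hy⟩ := hA; ⟨_, diffVec_mem_hull hy⟩
  have hc : IsCompact (hull x A) := (A.finite_toSet.image (diffVec x)).isCompact_convexHull ℝ
  obtain ⟨v, hv, hmin⟩ := hc.exists_isMinOn hne
    (continuous_finsetSum _ fun i _ => (continuous_apply i).pow 2).continuousOn
  exact ⟨v, hv, le_antisymm (le_csInf (hne.image _) (by rintro _ ⟨w, hw, rfl⟩; exact hmin hw))
    (convexDistSq_le hv)⟩

lemma sq_le_card_mul_convexDistSq {B : Finset (ι → Bool)} (hB : B.Nonempty) (C : Finset ι)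
    {k : ℝ} (hk : 0 ≤ k) (hC : ∀ y ∈ B, k ≤ #{i ∈ C | x i ≠ y i}) :
    k ^ 2 ≤ #C * convexDistSq x B := by
  obtain ⟨v, hv, hvd⟩ := exists_sqNorm_eq_convexDistSq (x := x) hB
  have hhalf : hull x B ⊆ {v | k ≤ ∑ i ∈ C, v i} := by
    refine convexHull_min ?_ (convex_halfSpace_ge ⟨fun _ _ => sum_add_distrib,
      fun _ _ => by simp [mul_sum]⟩ k)
    rintro _ ⟨y, hy, rfl⟩
    simpa [sum_diffVec] using hC y hy
  calc k ^ 2 ≤ (∑ i ∈ C, v i) ^ 2 := pow_le_pow_left₀ hk (hhalf hv) 2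
    _ ≤ #C * ∑ i ∈ C, v i ^ 2 := sq_sum_le_card_mul_sum_sq
    _ ≤ #C * sqNorm v := by
      gcongr
      exact sum_le_sum_of_subset_of_nonneg (subset_univ C) fun _ _ _ => sq_nonneg _
    _ = #C * convexDistSq x B := by rw [hvd]

end Basic

section RealInequalities

lemma exp_le_taylor {x : ℝ} (hx : |x| ≤ 1) :
    exp x ≤ 1 + x + x ^ 2 / 2 + x ^ 3 / 6 + x ^ 4 * (5 / 96) := by
  have h := (abs_le.1 (exp_bound hx (n := 4) (by norm_num))).2
  rw [pow_abs, abs_of_nonneg (by positivity)] at h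
  norm_num [sum_range_succ, Nat.factorial] at h
  linarith

lemma exp_sub_sq_add_exp_neg_le_two {u : ℝ} (h0 : 0 ≤ u) (h1 : u ≤ 1 / 2) :
    exp (u - u ^ 2) + exp (-u) ≤ 2 := by
  have e1 := exp_le_taylor (x := u - u ^ 2) (by rw [abs_le]; constructor <;> nlinarith)
  have e2 := exp_le_taylor (x := -u) (by rw [abs_le]; constructor <;> linarith)
  nlinarith [pow_nonneg h0 3, pow_nonneg h0 4, pow_nonneg h0 5, pow_nonneg h0 6,
    pow_nonneg h0 7, pow_nonneg h0 8, mul_nonneg h0 (sub_nonneg.2 h1)]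

lemma exp_quarter_le : exp (1 / 4) ≤ 4 / 3 := by
  have := exp_bound_div_one_sub_of_interval (x := 1 / 4) (by norm_num) (by norm_num)
  norm_num at this ⊢
  exact this

lemma two_sub_div_div_le_one_div {a b : ℝ} (ha : 0 < a) (hb : 0 < b) :
    (2 - a / b) / b ≤ 1 / a := by
  rw [div_le_div_iff₀ hb ha]
  have : (2 - a / b) * a = b - (b - a) ^ 2 / b := by field_simp; ring
  rw [this, one_mul]
  linarith [div_nonneg (sq_nonneg (b - a)) hb.le]

/-- Take `l = 0` for small `r`, and otherwise `l = 1 + 2 log r`, the minimiser of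
`(1 - l)² / 4 - l log r`. -/
lemma exists_exp_le_two_sub_mul_rpow {r : ℝ} (h0 : 0 < r) (h1 : r ≤ 1) :
    ∃ l ∈ Set.Icc (0 : ℝ) 1, exp ((1 - l) ^ 2 / 4) ≤ (2 - r) * r ^ l := by
  have hhalf : exp (-(1 / 2)) ≤ 2 / 3 := by
    rw [exp_neg, inv_le_comm₀ (exp_pos _) (by norm_num)]
    linarith [add_one_le_exp (1 / 2 : ℝ)]
  rcases le_or_gt r (2 / 3) with hr | hr
  · refine ⟨0, ⟨le_rfl, zero_le_one⟩, ?_⟩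
    norm_num
    linarith [exp_quarter_le]
  · set u := -log r with hu
    have hu0 : 0 ≤ u := neg_nonneg.2 (log_nonpos h0.le h1)
    have hu1 : u ≤ 1 / 2 := by
      have := (le_log_iff_exp_le h0).2 (hhalf.trans hr.le)
      linarith
    have hr : r = exp (-u) := by rw [hu, neg_neg, exp_log h0]
    refine ⟨1 - 2 * u, ⟨by linarith, by linarith⟩, ?_⟩
    rw [hr, ← exp_mul]
    calc exp ((1 - (1 - 2 * u)) ^ 2 / 4) = exp (u - u ^ 2) * exp (-u * (1 - 2 * u)) := by
          rw [← exp_add]; ring_nf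
      _ ≤ (2 - exp (-u)) * exp (-u * (1 - 2 * u)) := by
          gcongr
          linarith [exp_sub_sq_add_exp_neg_le_two hu0 hu1]

/-- Hölder's inequality with exponents `1 / l` and `1 / (1 - l)`, proved from weighted AM–GM;
unlike `Real.inner_le_Lp_mul_Lq` it covers the endpoints `l = 0` and `l = 1`. -/
lemma sum_mul_rpow_mul_rpow_le {α : Type*} (s : Finset α) {w f g : α → ℝ}
    (hw : ∀ i ∈ s, 0 ≤ w i) (hf : ∀ i ∈ s, 0 ≤ f i) (hg : ∀ i ∈ s, 0 ≤ g i)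
    {l : ℝ} (hl : l ∈ Set.Icc 0 1)
    (hF : 0 < ∑ i ∈ s, w i * f i) (hG : 0 < ∑ i ∈ s, w i * g i) :
    ∑ i ∈ s, w i * (f i ^ l * g i ^ (1 - l)) ≤
      (∑ i ∈ s, w i * f i) ^ l * (∑ i ∈ s, w i * g i) ^ (1 - l) := by
  set F := ∑ i ∈ s, w i * f i
  set G := ∑ i ∈ s, w i * g i
  set K := F ^ l * G ^ (1 - l)
  have hK : 0 ≤ K := by positivity
  have hpoint : ∀ i ∈ s, w i * (f i ^ l * g i ^ (1 - l)) ≤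
      K * (l / F * (w i * f i) + (1 - l) / G * (w i * g i)) := by
    intro i hi
    have amgm := geom_mean_le_arith_mean2_weighted hl.1 (sub_nonneg.2 hl.2)
      (div_nonneg (hf i hi) hF.le) (div_nonneg (hg i hi) hG.le) (by ring)
    rw [div_rpow (hf i hi) hF.le, div_rpow (hg i hi) hG.le] at amgm
    have hfg : f i ^ l * g i ^ (1 - l) ≤ K * (l * (f i / F) + (1 - l) * (g i / G)) := by
      calc f i ^ l * g i ^ (1 - l)
          = K * (f i ^ l / F ^ l * (g i ^ (1 - l) / G ^ (1 - l))) := by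
            simp only [K]; field_simp
        _ ≤ _ := by gcongr
    calc w i * (f i ^ l * g i ^ (1 - l))
        ≤ w i * (K * (l * (f i / F) + (1 - l) * (g i / G))) := by gcongr; exact hw i hi
      _ = _ := by ring
  calc ∑ i ∈ s, w i * (f i ^ l * g i ^ (1 - l))
      ≤ ∑ i ∈ s, K * (l / F * (w i * f i) + (1 - l) / G * (w i * g i)) := sum_le_sum hpoint
    _ = K * (l / F * F + (1 - l) / G * G) := by
      rw [← mul_sum, sum_add_distrib, ← mul_sum, ← mul_sum]
    _ = K := by field_simp; ring

end RealInequalities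

section Cube

variable {m : ℕ} {p : ℝ}

noncomputable def slice (ω : Bool) (A : Finset (Fin (m + 1) → Bool)) : Finset (Fin m → Bool) :=
  {z | Fin.cons ω z ∈ A}

noncomputable def proj (A : Finset (Fin (m + 1) → Bool)) : Finset (Fin m → Bool) :=
  A.image Fin.tail

variable {ω : Bool} {z : Fin m → Bool} {A : Finset (Fin (m + 1) → Bool)}

@[simp] lemma mem_slice : z ∈ slice ω A ↔ Fin.cons ω z ∈ A := by simp [slice]

lemma slice_subset_proj : slice ω A ⊆ proj A := fun _ hz =>
  mem_image.2 ⟨_, mem_slice.1 hz, Fin.tail_cons _ _⟩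

lemma sum_eq_sum_cons (H : (Fin (m + 1) → Bool) → ℝ) :
    ∑ y, H y = ∑ ω, ∑ z, H (Fin.cons ω z) := by
  rw [← Fintype.sum_prod_type']
  exact (Fintype.sum_equiv (Fin.consEquiv fun _ => Bool) _ _ fun _ => rfl).symm

lemma weight_cons : weight p (Fin.cons ω z) = coordWeight p ω * weight p z := by
  simp [weight, Fin.prod_univ_succ]

lemma prob_eq_sum_slice : prob p A = ∑ ω, coordWeight p ω * prob p (slice ω A) := by
  rw [prob, ← univ_inter A, ← sum_ite_mem, sum_eq_sum_cons]
  simp [prob, weight_cons, mul_sum, slice, sum_filter]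

lemma expMoment_succ : expMoment p A =
    ∑ ω, coordWeight p ω * ∑ z, weight p z * exp (convexDistSq (Fin.cons ω z) A / 4) := by
  rw [expMoment, sum_eq_sum_cons (fun y => weight p y * exp (convexDistSq y A / 4))]
  simp [weight_cons, mul_sum, mul_assoc]

lemma diffVec_cons (σ : Bool) (y : Fin m → Bool) :
    diffVec (Fin.cons ω z : Fin (m + 1) → Bool) (Fin.cons σ y) =
      Fin.cons (if ω = σ then 0 else 1) (diffVec z y) := by
  ext i
  refine Fin.cases ?_ (fun j => ?_) i <;> simp [diffVec]

lemma cons_zero_mem_hull {v : Fin m → ℝ} (hv : v ∈ hull z (slice ω A)) :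
    (Fin.cons 0 v : Fin (m + 1) → ℝ) ∈ hull (Fin.cons ω z) A := by
  let L : (Fin m → ℝ) →ₗ[ℝ] Fin (m + 1) → ℝ :=
    (Fin.consLinearEquiv ℝ fun _ => ℝ).toLinearMap ∘ₗ LinearMap.inr ℝ ℝ _
  have hL : L '' hull z (slice ω A) ⊆ hull (Fin.cons ω z) A := by
    rw [hull, L.image_convexHull]
    refine convexHull_mono ?_
    rintro _ ⟨_, ⟨y, hy, rfl⟩, rfl⟩
    exact ⟨Fin.cons ω y, mem_slice.1 hy, by simp [L, diffVec_cons]; rfl⟩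
  exact hL ⟨v, hv, rfl⟩

lemma tail_image_hull : Fin.tail '' hull (Fin.cons ω z) A = hull z (proj A) := by
  have hL : (Fin.tail : (Fin (m + 1) → ℝ) → Fin m → ℝ) = LinearMap.funLeft ℝ ℝ Fin.succ := rfl
  rw [hull, hull, hL, LinearMap.image_convexHull, ← hL, proj, coe_image, Set.image_image,
    Set.image_image]
  rfl

lemma exists_cons_mem_hull {v : Fin m → ℝ} (hv : v ∈ hull z (proj A)) :
    ∃ a : ℝ, a ^ 2 ≤ 1 ∧ (Fin.cons a v : Fin (m + 1) → ℝ) ∈ hull (Fin.cons ω z) A := by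
  rw [← tail_image_hull (ω := ω)] at hv
  obtain ⟨w, hw, rfl⟩ := hv
  have h := hull_subset_cube hw 0 trivial
  exact ⟨w 0, by nlinarith [h.1, h.2], by rwa [Fin.cons_self_tail]⟩

lemma sqNorm_cons (a : ℝ) (v : Fin m → ℝ) :
    sqNorm (Fin.cons a v : Fin (m + 1) → ℝ) = a ^ 2 + sqNorm v := by
  simp [sqNorm, Fin.sum_univ_succ]

lemma convexDistSq_cons_le_add_one (hA : A.Nonempty) :
    convexDistSq (Fin.cons ω z) A ≤ convexDistSq z (proj A) + 1 := by
  obtain ⟨v, hv, hvd⟩ := exists_sqNorm_eq_convexDistSq (x := z) (A := proj A) (hA.image Fin.tail)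
  obtain ⟨a, ha, hmem⟩ := exists_cons_mem_hull (ω := ω) hv
  calc convexDistSq (Fin.cons ω z) A ≤ sqNorm (Fin.cons a v : Fin (m + 1) → ℝ) :=
        convexDistSq_le hmem
    _ ≤ convexDistSq z (proj A) + 1 := by rw [sqNorm_cons, hvd]; linarith

/-- Interpolate between a point of the hull over the slice (lifted with first coordinate `0`) and
one over the projection (first coordinate in `[0, 1]`). -/
lemma convexDistSq_cons_le (hs : (slice ω A).Nonempty) {l : ℝ} (hl : l ∈ Set.Icc 0 1) :
    convexDistSq (Fin.cons ω z) A ≤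
      l * convexDistSq z (slice ω A) + (1 - l) * convexDistSq z (proj A) + (1 - l) ^ 2 := by
  obtain ⟨v₁, hv₁, hd₁⟩ := exists_sqNorm_eq_convexDistSq (x := z) hs
  obtain ⟨v₂, hv₂, hd₂⟩ := exists_sqNorm_eq_convexDistSq (x := z) (hs.mono slice_subset_proj)
  obtain ⟨a, ha, hmem⟩ := exists_cons_mem_hull (ω := ω) hv₂
  have hcomb : l • (Fin.cons 0 v₁ : Fin (m + 1) → ℝ) + (1 - l) • Fin.cons a v₂ ∈
      hull (Fin.cons ω z) A :=
    convex_convexHull ℝ _ (cons_zero_mem_hull hv₁) hmem hl.1 (sub_nonneg.2 hl.2) (by ring)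
  have hcons : l • (Fin.cons 0 v₁ : Fin (m + 1) → ℝ) + (1 - l) • Fin.cons a v₂ =
      Fin.cons ((1 - l) * a) (l • v₁ + (1 - l) • v₂) := by
    ext i
    refine Fin.cases ?_ (fun j => ?_) i <;> simp
  rw [hcons] at hcomb
  calc convexDistSq (Fin.cons ω z) A ≤ ((1 - l) * a) ^ 2 + sqNorm (l • v₁ + (1 - l) • v₂) := by
        rw [← sqNorm_cons]; exact convexDistSq_le hcomb
    _ ≤ (1 - l) ^ 2 + (l * sqNorm v₁ + (1 - l) * sqNorm v₂) := by
        refine add_le_add ?_ (sqNorm_combo_le hl v₁ v₂)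
        rw [mul_pow]
        exact mul_le_of_le_one_right (sq_nonneg _) ha
    _ = _ := by rw [hd₁, hd₂]; ring

end Cube

section Induction

variable {m : ℕ} {p : ℝ} {ω : Bool} {A : Finset (Fin (m + 1) → Bool)}

lemma sum_weight_mul_exp_cons_le (hp : p ∈ Set.Icc 0 1) (hA : A.Nonempty)
    (hproj : expMoment p (proj A) ≤ 1 / prob p (proj A)) :
    ∑ z, weight p z * exp (convexDistSq (Fin.cons ω z) A / 4) ≤ 2 / prob p (proj A) := by
  calc ∑ z, weight p z * exp (convexDistSq (Fin.cons ω z) A / 4)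
      ≤ ∑ z, exp (1 / 4) * (weight p z * exp (convexDistSq z (proj A) / 4)) := by
        refine sum_le_sum fun z _ => ?_
        rw [mul_left_comm, ← exp_add]
        gcongr
        · exact weight_nonneg hp z
        · linarith [convexDistSq_cons_le_add_one (ω := ω) (z := z) hA]
    _ = exp (1 / 4) * expMoment p (proj A) := by rw [← mul_sum]; rfl
    _ ≤ 2 * (1 / prob p (proj A)) :=
        mul_le_mul (exp_quarter_le.trans (by norm_num)) hproj (expMoment_nonneg hp _) zero_le_two
    _ = 2 / prob p (proj A) := by ring

lemma sum_weight_mul_exp_cons_le_mul_rpow (hp : p ∈ Set.Ioo 0 1) (hs : (slice ω A).Nonempty)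
    {l : ℝ} (hl : l ∈ Set.Icc 0 1) :
    ∑ z, weight p z * exp (convexDistSq (Fin.cons ω z) A / 4) ≤
      exp ((1 - l) ^ 2 / 4) * (expMoment p (slice ω A) ^ l * expMoment p (proj A) ^ (1 - l)) := by
  have hp' : p ∈ Set.Icc 0 1 := Set.Ioo_subset_Icc_self hp
  have hexp : ∀ B : Finset (Fin m → Bool), 0 < ∑ z, weight p z * exp (convexDistSq z B / 4) :=
    fun B => sum_pos (fun z _ => mul_pos (weight_pos hp z) (exp_pos _)) univ_nonempty
  calc ∑ z, weight p z * exp (convexDistSq (Fin.cons ω z) A / 4)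
      ≤ ∑ z, exp ((1 - l) ^ 2 / 4) * (weight p z * (exp (convexDistSq z (slice ω A) / 4) ^ l *
          exp (convexDistSq z (proj A) / 4) ^ (1 - l))) := by
        refine sum_le_sum fun z _ => ?_
        rw [mul_left_comm, ← exp_mul, ← exp_mul, ← exp_add, ← exp_add]
        gcongr
        · exact weight_nonneg hp' z
        · linarith [convexDistSq_cons_le (z := z) hs hl]
    _ ≤ _ := by
        rw [← mul_sum]
        gcongr
        exact sum_mul_rpow_mul_rpow_le _ (fun z _ => weight_nonneg hp' z)
          (fun _ _ => (exp_pos _).le) (fun _ _ => (exp_pos _).le) hl (hexp _) (hexp _)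

lemma sum_weight_mul_exp_cons_le_of_nonempty (hp : p ∈ Set.Ioo 0 1) (hs : (slice ω A).Nonempty)
    (hslice : expMoment p (slice ω A) ≤ 1 / prob p (slice ω A))
    (hproj : expMoment p (proj A) ≤ 1 / prob p (proj A)) :
    ∑ z, weight p z * exp (convexDistSq (Fin.cons ω z) A / 4) ≤
      (2 - prob p (slice ω A) / prob p (proj A)) / prob p (proj A) := by
  have hp' : p ∈ Set.Icc 0 1 := Set.Ioo_subset_Icc_self hp
  set P := prob p (proj A)
  set r := prob p (slice ω A) / P
  have hP : 0 < P := prob_pos hp (hs.mono slice_subset_proj)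
  have hr : 0 < r := div_pos (prob_pos hp hs) hP
  have hslice' : prob p (slice ω A) = r * P := by simp only [r]; field_simp
  obtain ⟨l, hl, hK⟩ := exists_exp_le_two_sub_mul_rpow hr
    ((div_le_one hP).2 (prob_mono hp' slice_subset_proj))
  have hpow : (1 / (r * P)) ^ l * (1 / P) ^ (1 - l) = 1 / r ^ l / P := by
    rw [one_div, one_div, inv_rpow (by positivity), inv_rpow hP.le, mul_rpow hr.le hP.le,
      rpow_sub hP, rpow_one]
    field_simp
  have h₁ := rpow_le_rpow (expMoment_nonneg hp' _) hslice hl.1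
  have h₂ := rpow_le_rpow (expMoment_nonneg hp' _) hproj (sub_nonneg.2 hl.2)
  rw [hslice'] at h₁
  calc ∑ z, weight p z * exp (convexDistSq (Fin.cons ω z) A / 4)
      ≤ exp ((1 - l) ^ 2 / 4) * (expMoment p (slice ω A) ^ l * expMoment p (proj A) ^ (1 - l)) :=
        sum_weight_mul_exp_cons_le_mul_rpow hp hs hl
    _ ≤ exp ((1 - l) ^ 2 / 4) * ((1 / (r * P)) ^ l * (1 / P) ^ (1 - l)) :=
        mul_le_mul_of_nonneg_left (mul_le_mul h₁ h₂ (rpow_nonneg (expMoment_nonneg hp' _) _)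
          (rpow_nonneg (by positivity) _)) (exp_pos _).le
    _ ≤ (2 - r) / P := by
        rw [hpow, ← mul_div_assoc, div_le_div_iff_of_pos_right hP, mul_one_div,
          div_le_iff₀ (by positivity)]
        exact hK

theorem expMoment_le (hp : p ∈ Set.Ioo 0 1) :
    ∀ {m : ℕ} {A : Finset (Fin m → Bool)}, A.Nonempty → expMoment p A ≤ 1 / prob p A
  | 0, A, ⟨y, hy⟩ => by
    have hA : A = univ := eq_univ_of_forall fun x => Subsingleton.elim y x ▸ hy
    simp [expMoment, prob, weight, hA, convexDistSq_eq_zero_of_mem]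
  | m + 1, A, hA => by
    have hp' : p ∈ Set.Icc 0 1 := Set.Ioo_subset_Icc_self hp
    set P := prob p (proj A)
    have hP : 0 < P := prob_pos hp (hA.image _)
    have hproj := expMoment_le hp (hA.image Fin.tail)
    have hfiber : ∀ ω, ∑ z, weight p z * exp (convexDistSq (Fin.cons ω z) A / 4) ≤
        (2 - prob p (slice ω A) / P) / P := fun ω => by
      rcases (slice ω A).eq_empty_or_nonempty with hs | hs
      · rw [hs, show prob p (∅ : Finset (Fin m → Bool)) = 0 from sum_empty, zero_div, sub_zero]
        exact sum_weight_mul_exp_cons_le hp' hA hproj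
      · exact sum_weight_mul_exp_cons_le_of_nonempty hp hs (expMoment_le hp hs) hproj
    calc expMoment p A
        = ∑ ω, coordWeight p ω * ∑ z, weight p z * exp (convexDistSq (Fin.cons ω z) A / 4) :=
          expMoment_succ
      _ ≤ ∑ ω, coordWeight p ω * ((2 - prob p (slice ω A) / P) / P) :=
          sum_le_sum fun ω _ => mul_le_mul_of_nonneg_left (hfiber ω) (coordWeight_nonneg hp' ω)
      _ = (2 - prob p A / P) / P := by
          rw [prob_eq_sum_slice]
          simp only [Fintype.sum_bool, coordWeight, if_true, Bool.false_eq_true, if_false]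
          field_simp
          ring
      _ ≤ 1 / prob p A := two_sub_div_div_le_one_div (prob_pos hp hA) hP

end Induction

section Certificates

variable {p : ℝ}

lemma prob_mul_prob_le_exp {ι : Type*} [Fintype ι] [DecidableEq ι] (hp : p ∈ Set.Ioo 0 1)
    {A B : Finset (ι → Bool)} (hA : A.Nonempty) (hmom : expMoment p A ≤ 1 / prob p A) {u : ℝ}
    (hu : ∀ x ∈ B, u ≤ convexDistSq x A) :
    prob p A * prob p B ≤ exp (-u / 4) := by
  have hp' : p ∈ Set.Icc 0 1 := Set.Ioo_subset_Icc_self hp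
  have hB : prob p B * exp (u / 4) ≤ 1 / prob p A :=
    calc prob p B * exp (u / 4) = ∑ x ∈ B, weight p x * exp (u / 4) := sum_mul _ _ _
      _ ≤ ∑ x ∈ B, weight p x * exp (convexDistSq x A / 4) := sum_le_sum fun x hx => by
          gcongr
          · exact weight_nonneg hp' x
          · exact hu x hx
      _ ≤ expMoment p A := sum_le_sum_of_subset_of_nonneg (subset_univ B) fun x _ _ =>
          mul_nonneg (weight_nonneg hp' x) (exp_pos _).le
      _ ≤ 1 / prob p A := hmom
  rw [neg_div, exp_neg, ← one_div, le_div_iff₀ (exp_pos _), mul_assoc]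
  exact (le_div_iff₀' (prob_pos hp hA)).1 hB

theorem prob_mul_prob_le_of_certificates_fin (hp : p ∈ Set.Ioo 0 1) {m : ℕ}
    {A B : Finset (Fin m → Bool)} {k s : ℝ} (hk : 0 ≤ k) (hs : 0 < s)
    (hcert : ∀ x ∈ A, ∃ C : Finset (Fin m), (#C : ℝ) ≤ s ∧
      ∀ y ∈ B, k ≤ #{i ∈ C | x i ≠ y i}) :
    prob p A * prob p B ≤ exp (-(k ^ 2 / s) / 4) := by
  rcases B.eq_empty_or_nonempty with rfl | hB
  · simp only [prob, sum_empty, mul_zero]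
    positivity
  rw [mul_comm]
  refine prob_mul_prob_le_exp hp hB (expMoment_le hp hB) fun x hx => ?_
  obtain ⟨C, hCs, hC⟩ := hcert x hx
  rw [div_le_iff₀ hs]
  calc k ^ 2 ≤ #C * convexDistSq x B := sq_le_card_mul_convexDistSq hB C hk hC
    _ ≤ convexDistSq x B * s := by
      rw [mul_comm]
      exact mul_le_mul_of_nonneg_left hCs convexDistSq_nonneg

theorem prob_mul_prob_le_of_certificates {ι : Type*} [Fintype ι] (hp : p ∈ Set.Ioo 0 1)
    {A B : Finset (ι → Bool)} {k s : ℝ} (hk : 0 ≤ k) (hs : 0 < s)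
    (hcert : ∀ x ∈ A, ∃ C : Finset ι, (#C : ℝ) ≤ s ∧ ∀ y ∈ B, k ≤ #{i ∈ C | x i ≠ y i}) :
    prob p A * prob p B ≤ exp (-(k ^ 2 / s) / 4) := by
  let e := Fintype.equivFin ι
  let E : (ι → Bool) ≃ (Fin (Fintype.card ι) → Bool) := e.arrowCongr (Equiv.refl Bool)
  have hE : ∀ x i, E x (e i) = x i := fun x i => by simp [E]
  have hprob : ∀ A : Finset (ι → Bool), prob p (A.map E.toEmbedding) = prob p A := fun A => by
    refine (sum_map _ _ _).trans (sum_congr rfl fun x _ => ?_)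
    simp only [weight, Equiv.coe_toEmbedding, ← e.prod_comp, hE]
  rw [← hprob A, ← hprob B]
  refine prob_mul_prob_le_of_certificates_fin hp hk hs fun x' hx' => ?_
  obtain ⟨x, hx, rfl⟩ := mem_map.1 hx'
  obtain ⟨C, hCs, hC⟩ := hcert x hx
  refine ⟨C.map e.toEmbedding, by simpa using hCs, fun y' hy' => ?_⟩
  obtain ⟨y, hy, rfl⟩ := mem_map.1 hy'
  simpa [filter_map, Function.comp_def, hE] using hC y hy

end Certificates

end Talagrand

open Talagrand

section Domination

variable {n : ℕ}

lemma isDominating_univ (G : SimpleGraph (Fin n)) : IsDominating G ↑(univ : Finset (Fin n)) :=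
  fun v => Or.inl (mem_coe.2 (mem_univ v))

lemma IsDominating.mono {G : SimpleGraph (Fin n)} {S T : Finset (Fin n)} (hST : S ⊆ T)
    (h : IsDominating G ↑S) : IsDominating G ↑T :=
  fun v => (h v).imp (fun hv => hST hv) fun ⟨u, hu, huv⟩ => ⟨u, hST hu, huv⟩

lemma domNumber_le_card {G : SimpleGraph (Fin n)} {S : Finset (Fin n)} (h : IsDominating G ↑S) :
    domNumber G ≤ #S :=
  Nat.sInf_le ⟨S, rfl, h⟩

lemma domNumber_le (G : SimpleGraph (Fin n)) : domNumber G ≤ n := by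
  simpa using domNumber_le_card (isDominating_univ G)

lemma exists_isDominating_card_eq {G : SimpleGraph (Fin n)} {r : ℕ} (h₁ : domNumber G ≤ r)
    (h₂ : r ≤ n) : ∃ S : Finset (Fin n), #S = r ∧ IsDominating G ↑S := by
  obtain ⟨S, hS, hdom⟩ : ∃ S : Finset (Fin n), #S = domNumber G ∧ IsDominating G ↑S :=
    Nat.sInf_mem (s := {r | ∃ S : Finset (Fin n), #S = r ∧ IsDominating G ↑S})
      ⟨n, univ, by simp, isDominating_univ G⟩
  obtain ⟨T, hST, hT⟩ := exists_superset_card_eq (hS ▸ h₁) (by simpa using h₂)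
  exact ⟨T, hT, hdom.mono hST⟩

/-- Join each vertex outside `S` to a neighbour in `S`. A graph `y` that keeps such an edge still
dominates its outer endpoint from `S`; the other outer endpoints are added to `S`. -/
lemma exists_edges_domNumber_le (x : Sym2 (Fin n) → Bool) {S : Finset (Fin n)}
    (hS : IsDominating (graphOf x) ↑S) :
    ∃ C : Finset (Sym2 (Fin n)), #C ≤ n - #S ∧
      ∀ y, domNumber (graphOf y) ≤ #S + #{e ∈ C | x e ≠ y e} := by
  have hnbr : ∀ v ∈ univ \ S, ∃ u ∈ S, (graphOf x).Adj u v := fun v hv =>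
    (hS v).resolve_left (by simpa using hv)
  choose! nbr hnbrS hnbrAdj using hnbr
  let edge : Fin n → Sym2 (Fin n) := fun v => s(nbr v, v)
  refine ⟨(univ \ S).image edge, card_image_le.trans (by simp [card_sdiff]), fun y => ?_⟩
  let T : Finset (Fin n) := {v ∈ univ \ S | y (edge v) = false}
  have hdom : IsDominating (graphOf y) ↑(S ∪ T) := by
    intro v
    by_cases hv : v ∈ S
    · exact Or.inl (by simp [hv])
    have hv' : v ∈ univ \ S := by simp [hv]
    cases hy : y (edge v)
    · exact Or.inl (by simp [T, hv, hy])
    · exact Or.inr ⟨nbr v, by simp [hnbrS v hv'], (hnbrAdj v hv').1, hy⟩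
  have hT : #T ≤ #{e ∈ (univ \ S).image edge | x e ≠ y e} := by
    refine card_le_card_of_injOn edge (fun v hv => ?_) (fun v hv w hw hvw => ?_)
    · obtain ⟨hv, hy⟩ := mem_filter.1 hv
      rw [mem_coe, mem_filter, mem_image]
      exact ⟨⟨v, hv, rfl⟩, by rw [(hnbrAdj v hv).2, hy]; decide⟩
    · have hvS := (mem_sdiff.1 (mem_filter.1 hv).1).2
      rcases Sym2.eq_iff.1 hvw with ⟨-, h⟩ | ⟨-, h⟩
      · exact h
      · exact absurd (h ▸ hnbrS w (mem_filter.1 hw).1) hvS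
  calc domNumber (graphOf y) ≤ #(S ∪ T) := domNumber_le_card hdom
    _ ≤ #S + #T := card_union_le S T
    _ ≤ _ := Nat.add_le_add_left hT _

lemma exists_edges_domNumber_sub_floor_le {x : Sym2 (Fin n) → Bool} {b : ℝ} (hb₀ : 0 ≤ b)
    (hb : b < n) (hx : (domNumber (graphOf x) : ℝ) ≤ b) :
    ∃ C : Finset (Sym2 (Fin n)), (#C : ℝ) ≤ n - ⌊b⌋₊ ∧
      ∀ y, (domNumber (graphOf y) : ℝ) - ⌊b⌋₊ ≤ #{e ∈ C | x e ≠ y e} := by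
  have hβn : ⌊b⌋₊ ≤ n := ((Nat.floor_lt hb₀).2 hb).le
  obtain ⟨S, hS, hdom⟩ := exists_isDominating_card_eq (Nat.le_floor hx) hβn
  obtain ⟨C, hC, hCy⟩ := exists_edges_domNumber_le x hdom
  refine ⟨C, by rw [← Nat.cast_sub hβn, ← hS]; exact_mod_cast hC, fun y => ?_⟩
  rw [sub_le_iff_le_add', ← hS]
  exact_mod_cast hCy y

end Domination

lemma bernoulliMeasure_singleton {p : ℝ} (hp : p ∈ Set.Icc 0 1) (b : Bool) :
    bernoulliMeasure p {b} = ENNReal.ofReal (coordWeight p b) := by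
  rw [bernoulliMeasure, PMF.toMeasure_apply_singleton _ _ (measurableSet_singleton b)]
  have hmin : min p.toNNReal 1 = p.toNNReal := min_eq_left (Real.toNNReal_le_one.2 hp.2)
  cases b
  · change 1 - ((min p.toNNReal 1 : NNReal) : ENNReal) = _
    rw [hmin, coordWeight, if_neg Bool.false_ne_true, ENNReal.ofReal_sub _ hp.1, ENNReal.ofReal_one]
    rfl
  · change ((min p.toNNReal 1 : NNReal) : ENNReal) = _
    rw [hmin, coordWeight, if_pos rfl]
    rfl

lemma pi_bernoulliMeasure_coe {ι : Type*} [Fintype ι] {p : ℝ} (hp : p ∈ Set.Icc 0 1)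
    (A : Finset (ι → Bool)) :
    Measure.pi (fun _ : ι => bernoulliMeasure p) ↑A = ENNReal.ofReal (prob p A) := by
  rw [← sum_measure_singleton, prob, ENNReal.ofReal_sum_of_nonneg fun x _ => weight_nonneg hp x]
  refine sum_congr rfl fun x _ => ?_
  rw [Measure.pi_singleton, weight,
    ENNReal.ofReal_prod_of_nonneg fun _ _ => coordWeight_nonneg hp _]
  exact prod_congr rfl fun i _ => bernoulliMeasure_singleton hp (x i)

lemma gnp_setOf {n : ℕ} {p : ℝ} (hp : p ∈ Set.Icc 0 1) (P : (Sym2 (Fin n) → Bool) → Prop) :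
    gnp n p {f | P f} = ENNReal.ofReal (prob p {f | P f}) := by
  rw [gnp, ← pi_bernoulliMeasure_coe hp, coe_filter_univ]

lemma sq_div_le_sq_add_div_add {t c ε : ℝ} (ht : 0 ≤ t) (htc : t ≤ c) (hε : 0 ≤ ε) (hc : 0 < c) :
    t ^ 2 / c ≤ (t + ε) ^ 2 / (c + ε) := by
  rw [div_le_div_iff₀ hc (by linarith)]
  nlinarith [mul_nonneg (mul_nonneg ht hε) (by linarith : 0 ≤ 2 * c - t),
    mul_nonneg (sq_nonneg ε) hc.le]

theorem stmt_12_general (n : ℕ) (p : ℝ) (hp0 : 0 < p) (hp1 : p < 1)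
    (b t : ℝ) (hb : b < n) (ht : 0 ≤ t) :
    gnp n p {f | (domNumber (graphOf f) : ℝ) ≤ b} *
        gnp n p {f | (domNumber (graphOf f) : ℝ) ≥ b + t} ≤
      ENNReal.ofReal (Real.exp (-(t ^ 2) / (4 * ((n : ℝ) - b)))) := by
  have hp : p ∈ Set.Ioo 0 1 := ⟨hp0, hp1⟩
  have hp' : p ∈ Set.Icc 0 1 := Set.Ioo_subset_Icc_self hp
  rw [gnp_setOf hp', gnp_setOf hp', ← ENNReal.ofReal_mul (prob_nonneg hp' _)]
  refine ENNReal.ofReal_le_ofReal ?_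
  set A : Finset (Sym2 (Fin n) → Bool) := {f | (domNumber (graphOf f) : ℝ) ≤ b}
  set B : Finset (Sym2 (Fin n) → Bool) := {f | (domNumber (graphOf f) : ℝ) ≥ b + t}
  rcases A.eq_empty_or_nonempty with hA | ⟨x₀, hx₀⟩
  · simp only [hA, prob, sum_empty, zero_mul]
    positivity
  rcases B.eq_empty_or_nonempty with hB | ⟨y₀, hy₀⟩
  · simp only [hB, prob, sum_empty, mul_zero]
    positivity
  have hb₀ : 0 ≤ b := (Nat.cast_nonneg _).trans (mem_filter.1 hx₀).2
  have htn : t ≤ n - b := by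
    have : (domNumber (graphOf y₀) : ℝ) ≤ n := by exact_mod_cast domNumber_le _
    linarith [(mem_filter.1 hy₀).2]
  have hβb : (⌊b⌋₊ : ℝ) ≤ b := Nat.floor_le hb₀
  calc prob p A * prob p B ≤ exp (-((t + (b - ⌊b⌋₊)) ^ 2 / ((n - b) + (b - ⌊b⌋₊))) / 4) :=
        prob_mul_prob_le_of_certificates hp (by linarith) (by linarith) fun x hx =>
          (exists_edges_domNumber_sub_floor_le hb₀ hb (mem_filter.1 hx).2).imp fun C hC =>
            ⟨by linarith [hC.1], fun y hy => by linarith [hC.2 y, (mem_filter.1 hy).2]⟩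
    _ ≤ exp (-(t ^ 2 / (n - b)) / 4) := by
        have := sq_div_le_sq_add_div_add ht htn (sub_nonneg.2 hβb) (sub_pos.2 hb)
        exact exp_le_exp.2 (by linarith)
    _ = exp (-(t ^ 2) / (4 * ((n : ℝ) - b))) := by rw [neg_div, neg_div, div_div, mul_comm]

/-- Corollary 11, from Talagrand's inequality: for every `n ≥ 1`,
`p ∈ (0,1)`, `b < n` and `t ≥ 0`,
`P(D ≤ b) P(D ≥ b + t) ≤ exp(-t²/(4(n-b)))`. -/
theorem stmt_12 (n : ℕ) (hn : 1 ≤ n) (p : ℝ) (hp0 : 0 < p) (hp1 : p < 1)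
    (b t : ℝ) (hb : b < n) (ht : 0 ≤ t) :
    gnp n p {f | (domNumber (graphOf f) : ℝ) ≤ b} *
        gnp n p {f | (domNumber (graphOf f) : ℝ) ≥ b + t} ≤
      ENNReal.ofReal (Real.exp (-(t ^ 2) / (4 * ((n : ℝ) - b)))) :=
  stmt_12_general n p hp0 hp1 b t hb ht
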